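/- Let n ≥ 2 and μ ∈ ℝ, and let U := {x ∈ ℝⁿ : 1 + μ|x|² > 0} (so U is the open ball of radius 1/√(−μ) if μ < 0, and U = ℝⁿ if μ ≥ 0). Define F : U × (ℝⁿ∖{0}) → ℝ by F(x,y) := √( (1 + μ|x|²)|y|² − μ⟨x,y⟩² ) / (1 + μ|x|²)^{3/4}, where |·| and ⟨·,·⟩ are the Euclidean norm and inner product. Then (1 + μ|x|²)|y|² − μ⟨x,y⟩² > 0 for all x ∈ U and y ≠ 0, and F is dually flat on U: for every x ∈ U, y ∈ ℝⁿ∖{0} and every index l ∈ {1,…,n}, Σ_{k=1}^{n} y^k · ∂²(F²)/(∂x^k ∂y^l)(x,y) − 2 ∂(F²)/∂x^l(x,y) = 0. -/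

import Mathlib

/-!
Write `φ = 1 + μ|x|²` and `A = φ|y|² − μ⟨x,y⟩²`, so that `F² = A φ^{-3/2}` on `U`.
For `μ ≥ 0` Cauchy–Schwarz gives `A ≥ |y|²`, and for `μ < 0` trivially `A ≥ φ|y|²`; hence `A > 0`.
For dual flatness, `∂(F²)/∂y^l = 2(φ y^l − μ⟨x,y⟩x^l) φ^{-3/2}`; differentiating in `x^k`
produces terms linear in `x^k`, `y^k` and `δ^k_l`, which contraction with `y^k` turns into
`⟨x,y⟩`, `|y|²` and `y^l`. Comparing with `2 ∂(F²)/∂x^l`, everything cancels once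
`φ^{-3/2}` is written as `φ · φ^{-5/2}`.
-/

/-- The Riemannian metric `F(x,y) = √((1 + μ|x|²)|y|² − μ⟨x,y⟩²) / (1 + μ|x|²)^{3/4}`
on `U = {x : 1 + μ|x|² > 0}`, where `|·|`, `⟨·,·⟩` are the Euclidean norm and
inner product on `ℝⁿ`. -/
noncomputable def F18 (n : ℕ) (μ : ℝ) (x y : Fin n → ℝ) : ℝ :=
  Real.sqrt ((1 + μ * ∑ i, x i ^ 2) * (∑ i, y i ^ 2) - μ * (∑ i, x i * y i) ^ 2) /
    (1 + μ * ∑ i, x i ^ 2) ^ ((3 : ℝ) / 4)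

open Finset Function Filter Topology

theorem Finset.sum_apply_update {ι α β : Type*} [Fintype ι] [DecidableEq ι] [AddCommGroup β]
    (f : ι → α → β) (x : ι → α) (k : ι) (t : α) :
    ∑ i, f i (update x k t i) = ∑ i, f i (x i) + (f k t - f k (x k)) := by
  simp_rw [apply_update f x k t, sum_update_of_mem (mem_univ k),
    ← add_sum_erase _ _ (mem_univ k), sdiff_singleton_eq_erase]
  abel

theorem HasDerivAt.sum_apply_update {ι : Type*} [Fintype ι] [DecidableEq ι]
    {f : ι → ℝ → ℝ} {f' : ℝ} {x : ι → ℝ} {k : ι} (hf : HasDerivAt (f k) f' (x k)) :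
    HasDerivAt (fun t => ∑ i, f i (update x k t i)) f' (x k) := by
  simp_rw [Finset.sum_apply_update]
  exact (hf.sub_const _).const_add _

theorem hasDerivAt_update_apply {ι : Type*} [DecidableEq ι] (x : ι → ℝ) (k l : ι) :
    HasDerivAt (fun t => update x k t l) (if l = k then 1 else 0) (x k) := by
  simpa [Pi.single_apply] using hasDerivAt_pi.mp (hasDerivAt_update x k (x k)) l

theorem Finset.sum_mul_add_mul_add_mul_ite {ι : Type*} [Fintype ι] [DecidableEq ι]
    (x y : ι → ℝ) (l : ι) (a b c : ℝ) :
    ∑ k, y k * (a * x k + b * y k + c * if l = k then 1 else 0) =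
      a * ∑ k, x k * y k + b * ∑ k, y k ^ 2 + c * y l := by
  simp only [mul_add, mul_ite, mul_one, mul_zero, sum_add_distrib, sum_ite_eq, mem_univ,
    if_true, mul_sum]
  congr 1
  · congr 1 <;> exact sum_congr rfl fun _ _ => by ring
  · ring

theorem sum_sq_pos_of_ne_zero {ι : Type*} [Fintype ι] {y : ι → ℝ} (hy : y ≠ 0) :
    0 < ∑ i, y i ^ 2 := by
  refine (sum_nonneg fun i _ => sq_nonneg (y i)).lt_of_ne' fun h => hy ?_
  ext i
  simpa using (sum_eq_zero_iff_of_nonneg fun i _ => sq_nonneg (y i)).mp h i (mem_univ i)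

variable {n : ℕ} {μ : ℝ}

def conformalFactor (μ : ℝ) (x : Fin n → ℝ) : ℝ := 1 + μ * ∑ i, x i ^ 2

def radicand (μ : ℝ) (x y : Fin n → ℝ) : ℝ :=
  conformalFactor μ x * ∑ i, y i ^ 2 - μ * (∑ i, x i * y i) ^ 2

theorem radicand_pos {x y : Fin n → ℝ} (hx : 0 < conformalFactor μ x) (hy : y ≠ 0) :
    0 < radicand μ x y := by
  have hy2 := sum_sq_pos_of_ne_zero hy
  unfold radicand conformalFactor at *
  rcases le_or_gt 0 μ with hμ | hμ
  · have cauchySchwarz := sum_mul_sq_le_sq_mul_sq univ x y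
    nlinarith
  · nlinarith [sq_nonneg (∑ i, x i * y i)]

theorem radicand_nonneg {x : Fin n → ℝ} (hx : 0 < conformalFactor μ x) (y : Fin n → ℝ) :
    0 ≤ radicand μ x y := by
  rcases eq_or_ne y 0 with rfl | hy
  · simp [radicand]
  · exact (radicand_pos hx hy).le

theorem F18_sq {x : Fin n → ℝ} (hx : 0 < conformalFactor μ x) (y : Fin n → ℝ) :
    F18 n μ x y ^ 2 = radicand μ x y * conformalFactor μ x ^ (-(3 / 2) : ℝ) := by
  rw [show F18 n μ x y = √(radicand μ x y) / conformalFactor μ x ^ (3 / 4 : ℝ) from rfl,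
    div_pow, Real.sq_sqrt (radicand_nonneg hx y), ← Real.rpow_natCast, ← Real.rpow_mul hx.le,
    Real.rpow_neg hx.le, div_eq_mul_inv]
  norm_num

section partialDerivatives

variable (x y : Fin n → ℝ) (k l : Fin n)

theorem hasDerivAt_conformalFactor_update :
    HasDerivAt (fun t => conformalFactor μ (update x k t)) (2 * μ * x k) (x k) := by
  have := ((HasDerivAt.sum_apply_update (f := fun _ v => v ^ 2)
    (hasDerivAt_pow 2 (x k))).const_mul μ).const_add 1
  unfold conformalFactor
  exact this.congr_deriv (by simp only [Nat.cast_ofNat, Nat.add_one_sub_one, pow_one]; ring)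

theorem hasDerivAt_radicand_update_left :
    HasDerivAt (fun t => radicand μ (update x k t) y)
      (2 * μ * (x k * ∑ i, y i ^ 2 - (∑ i, x i * y i) * y k)) (x k) := by
  have hdot := HasDerivAt.sum_apply_update (f := fun i v => v * y i)
    ((hasDerivAt_id (x k)).mul_const (y k))
  have := ((hasDerivAt_conformalFactor_update (μ := μ) x k).mul_const (∑ i, y i ^ 2)).sub
    ((hdot.pow 2).const_mul μ)
  unfold radicand
  refine this.congr_deriv ?_
  simp only [update_eq_self, Nat.cast_ofNat, Nat.add_one_sub_one, pow_one]
  ring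

theorem hasDerivAt_radicand_update_right :
    HasDerivAt (fun r => radicand μ x (update y l r))
      (2 * (conformalFactor μ x * y l - μ * (∑ i, x i * y i) * x l)) (y l) := by
  have hdot := HasDerivAt.sum_apply_update (f := fun i v => x i * v)
    ((hasDerivAt_id (y l)).const_mul (x l))
  have hsq := HasDerivAt.sum_apply_update (f := fun _ v => v ^ 2) (hasDerivAt_pow 2 (y l))
  have := (hsq.const_mul (conformalFactor μ x)).sub ((hdot.pow 2).const_mul μ)
  unfold radicand
  refine this.congr_deriv ?_
  simp only [update_eq_self, Nat.cast_ofNat, Nat.add_one_sub_one, pow_one]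
  ring

theorem eventually_conformalFactor_update_pos (hx : 0 < conformalFactor μ x) :
    ∀ᶠ t in 𝓝 (x k), 0 < conformalFactor μ (update x k t) :=
  continuousAt_const.eventually_lt (hasDerivAt_conformalFactor_update x k).continuousAt
    (by simpa using hx)

theorem hasDerivAt_mul_rpow_conformalFactor_update {g : (Fin n → ℝ) → ℝ} {g' : ℝ} (p : ℝ)
    (hx : 0 < conformalFactor μ x) (hg : HasDerivAt (fun t => g (update x k t)) g' (x k)) :
    HasDerivAt (fun t => g (update x k t) * conformalFactor μ (update x k t) ^ p)
      (g' * conformalFactor μ x ^ p + g x * (2 * μ * x k * p * conformalFactor μ x ^ (p - 1)))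
      (x k) := by
  simpa only [update_eq_self] using hg.fun_mul
    ((hasDerivAt_conformalFactor_update x k).rpow_const (p := p) (Or.inl (by simpa using hx.ne')))

theorem deriv_F18_sq_update_left (hx : 0 < conformalFactor μ x) :
    deriv (fun t => F18 n μ (update x l t) y ^ 2) (x l) =
      2 * μ * (x l * ∑ i, y i ^ 2 - (∑ i, x i * y i) * y l) * conformalFactor μ x ^ (-(3 / 2) : ℝ)
        - 3 * μ * x l * radicand μ x y * conformalFactor μ x ^ (-(5 / 2) : ℝ) := by
  have hF : (fun t => F18 n μ (update x l t) y ^ 2) =ᶠ[𝓝 (x l)]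
      fun t => radicand μ (update x l t) y * conformalFactor μ (update x l t) ^ (-(3 / 2) : ℝ) :=
    (eventually_conformalFactor_update_pos x l hx).mono fun t ht => F18_sq ht y
  rw [hF.deriv_eq,
    (hasDerivAt_mul_rpow_conformalFactor_update (g := fun x' => radicand μ x' y) x l _ hx
      (hasDerivAt_radicand_update_left (μ := μ) x y l)).deriv,
    show (-(3 / 2) : ℝ) - 1 = -(5 / 2) by norm_num]
  ring

theorem deriv_F18_sq_update_right (hx : 0 < conformalFactor μ x) :
    deriv (fun r => F18 n μ x (update y l r) ^ 2) (y l) =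
      2 * (conformalFactor μ x * y l - μ * (∑ i, x i * y i) * x l) *
        conformalFactor μ x ^ (-(3 / 2) : ℝ) := by
  simp_rw [F18_sq hx]
  exact ((hasDerivAt_radicand_update_right x y l).mul_const _).deriv

theorem deriv_deriv_F18_sq_update (hx : 0 < conformalFactor μ x) :
    deriv (fun t => deriv (fun r => F18 n μ (update x k t) (update y l r) ^ 2) (y l)) (x k) =
      2 * (2 * μ * x k * y l - μ * (y k * x l + (∑ i, x i * y i) * if l = k then 1 else 0)) *
          conformalFactor μ x ^ (-(3 / 2) : ℝ)
        - 6 * μ * x k * (conformalFactor μ x * y l - μ * (∑ i, x i * y i) * x l) *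
          conformalFactor μ x ^ (-(5 / 2) : ℝ) := by
  have hF : (fun t => deriv (fun r => F18 n μ (update x k t) (update y l r) ^ 2) (y l))
      =ᶠ[𝓝 (x k)] fun t => 2 * (conformalFactor μ (update x k t) * y l
          - μ * (∑ i, update x k t i * y i) * update x k t l)
        * conformalFactor μ (update x k t) ^ (-(3 / 2) : ℝ) :=
    (eventually_conformalFactor_update_pos x k hx).mono fun t ht =>
      deriv_F18_sq_update_right (update x k t) y l ht
  have hdot := HasDerivAt.sum_apply_update (f := fun i v => v * y i)
    ((hasDerivAt_id (x k)).mul_const (y k))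
  have hg := (((hasDerivAt_conformalFactor_update (μ := μ) x k).mul_const (y l)).sub
    ((hdot.const_mul μ).mul (hasDerivAt_update_apply x k l))).const_mul 2
  rw [hF.deriv_eq, (hasDerivAt_mul_rpow_conformalFactor_update (g := fun x' =>
    2 * (conformalFactor μ x' * y l - μ * (∑ i, x' i * y i) * x' l)) x k _ hx hg).deriv,
    update_eq_self, show (-(3 / 2) : ℝ) - 1 = -(5 / 2) by norm_num]
  ring

end partialDerivatives

theorem stmt18_general (n : ℕ) (μ : ℝ) :
    -- positivity of the radicand on U for y ≠ 0
    (∀ x : Fin n → ℝ, 0 < 1 + μ * ∑ i, x i ^ 2 → ∀ y : Fin n → ℝ, y ≠ 0 →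
      0 < (1 + μ * ∑ i, x i ^ 2) * (∑ i, y i ^ 2) - μ * (∑ i, x i * y i) ^ 2) ∧
    -- F is dually flat on U:
    -- Σ_k y^k · ∂²(F²)/(∂x^k ∂y^l) − 2 ∂(F²)/∂x^l = 0
    (∀ x : Fin n → ℝ, 0 < 1 + μ * ∑ i, x i ^ 2 → ∀ y : Fin n → ℝ, y ≠ 0 →
      ∀ l : Fin n,
        (∑ k : Fin n, y k *
          deriv (fun t =>
            deriv (fun r => (F18 n μ (Function.update x k t) (Function.update y l r)) ^ 2)
              (y l)) (x k)) -
          2 * deriv (fun t => (F18 n μ (Function.update x l t) y) ^ 2) (x l) = 0) := by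
  refine ⟨fun x hx y hy => radicand_pos hx hy, fun x hx y _ l => ?_⟩
  set φ := conformalFactor μ x
  have hφ : φ ^ (-(3 / 2) : ℝ) = φ * φ ^ (-(5 / 2) : ℝ) := by
    rw [← Real.rpow_one_add' (show 0 ≤ φ from hx.le) (by norm_num)]
    norm_num
  have hmixed : ∀ k, deriv (fun t => deriv (fun r => F18 n μ (update x k t) (update y l r) ^ 2)
      (y l)) (x k) =
        (4 * μ * y l * φ ^ (-(3 / 2) : ℝ) - 6 * μ * (φ * y l - μ * (∑ i, x i * y i) * x l) *
          φ ^ (-(5 / 2) : ℝ)) * x k + (-2 * μ * x l * φ ^ (-(3 / 2) : ℝ)) * y k +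
        (-2 * μ * (∑ i, x i * y i) * φ ^ (-(3 / 2) : ℝ)) * if l = k then 1 else 0 := fun k => by
    rw [deriv_deriv_F18_sq_update x y k l hx]
    ring
  rw [sum_congr rfl fun k _ => by rw [hmixed k], sum_mul_add_mul_add_mul_ite,
    deriv_F18_sq_update_left x y l hx, radicand, hφ]
  ring

theorem stmt18 (n : ℕ) (hn : 2 ≤ n) (μ : ℝ) :
    -- positivity of the radicand on U for y ≠ 0
    (∀ x : Fin n → ℝ, 0 < 1 + μ * ∑ i, x i ^ 2 → ∀ y : Fin n → ℝ, y ≠ 0 →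
      0 < (1 + μ * ∑ i, x i ^ 2) * (∑ i, y i ^ 2) - μ * (∑ i, x i * y i) ^ 2) ∧
    -- F is dually flat on U:
    -- Σ_k y^k · ∂²(F²)/(∂x^k ∂y^l) − 2 ∂(F²)/∂x^l = 0
    (∀ x : Fin n → ℝ, 0 < 1 + μ * ∑ i, x i ^ 2 → ∀ y : Fin n → ℝ, y ≠ 0 →
      ∀ l : Fin n,
        (∑ k : Fin n, y k *
          deriv (fun t =>
            deriv (fun r => (F18 n μ (Function.update x k t) (Function.update y l r)) ^ 2)
              (y l)) (x k)) -
          2 * deriv (fun t => (F18 n μ (Function.update x l t) y) ^ 2) (x l) = 0) :=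
  stmt18_general n μ
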